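/- For an n-vertex planar graph G with a planar embedding 𝓔, minimum degree δ(G) ≥ 2 and maximum degree Δ(G) ≤ 3, the constructed Generalized Factor instance A has order and size linear in n: each vertex v ∈ 𝒱 is adjacent in A to at most six block vertices and at most two normal-face vertices, so A has at most 8n edges, and the number of vertices of A is O(n). -/

import Mathlib

set_option autoImplicit false
set_option linter.unusedVariables false
set_option linter.unreachableTactic false
set_option linter.unusedTactic false

/-! ## Finite loopless multigraphs -/

/-- A finite loopless multigraph: finite vertex and edge types, each edge has an
unordered pair of distinct endpoints. -/
structure Multigraph : Type 1 where
  V : Type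
  E : Type
  finV : Finite V
  finE : Finite E
  ends : E → Sym2 V
  loopless : ∀ e, ¬ (ends e).IsDiag

attribute [instance] Multigraph.finV Multigraph.finE

namespace Multigraph

variable (G : Multigraph)

/-- The degree of a vertex: the number of incident edges (no loops exist). -/
noncomputable def degree (v : G.V) : ℕ :=
  Nat.card {e : G.E // v ∈ G.ends e}

/-- The underlying simple graph ("adjacency"). -/
def toSimpleGraph : SimpleGraph G.V where
  Adj x y := x ≠ y ∧ ∃ e, G.ends e = s(x, y)
  symm := by
    refine ⟨?_⟩
    rintro x y ⟨hxy, e, he⟩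
    exact ⟨hxy.symm, e, by rw [he, Sym2.eq_swap]⟩
  loopless := ⟨fun x h => h.1 rfl⟩

/-- Connectivity of a multigraph. -/
def Connected : Prop := G.toSimpleGraph.Connected

/-- `G` is `k`-(vertex-)connected: more than `k` vertices, and removing fewer than
`k` vertices leaves the graph connected. -/
def KConnected (k : ℕ) : Prop :=
  k < Nat.card G.V ∧
    ∀ S : Set G.V, Nat.card S < k → ((G.toSimpleGraph.induce (Sᶜ)).Connected)

/-- A multigraph is simple if distinct edges have distinct endpoint pairs. -/
def Simple : Prop := Function.Injective G.ends

/-- Delete a set of edges. -/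
def deleteEdges (F : Set G.E) : Multigraph where
  V := G.V
  E := {e : G.E // e ∉ F}
  finV := G.finV
  finE := Subtype.finite
  ends e := G.ends e.1
  loopless e := G.loopless e.1

/-- `G` is `k`-edge-connected. -/
def EdgeConnGE (k : ℕ) : Prop :=
  G.Connected ∧ ∀ F : Set G.E, Nat.card F < k → (G.deleteEdges F).Connected

/-- The edge connectivity `θ(G)`. -/
noncomputable def edgeConn : ℕ := sSup {k : ℕ | G.EdgeConnGE k}

/-- An edge is a bridge if deleting it disconnects its endpoints. -/
def IsBridge (e : G.E) : Prop :=
  ∃ x y : G.V, G.ends e = s(x, y) ∧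
    ¬ (G.deleteEdges {e}).toSimpleGraph.Reachable x y

end Multigraph

/-- A subgraph relation between multigraphs: injections of vertices and edges
compatible with endpoints. -/
structure Multigraph.SubgraphOf (G H : Multigraph) where
  vmap : G.V ↪ H.V
  emap : G.E ↪ H.E
  ends_eq : ∀ e : G.E, H.ends (emap e) = (G.ends e).map vmap

/-- Isomorphism of multigraphs. -/
structure Multigraph.Iso (G H : Multigraph) where
  veq : G.V ≃ H.V
  eeq : G.E ≃ H.E
  ends_eq : ∀ e : G.E, H.ends (eeq e) = (G.ends e).map veq

namespace Multigraph

/-! ## Darts, rotation systems, faces, planar embeddings -/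

/-- A dart is an edge together with one of its endpoints. -/
abbrev Dart (G : Multigraph) : Type := {p : G.E × G.V // p.2 ∈ G.ends p.1}

instance (G : Multigraph) : Finite G.Dart :=
  inferInstanceAs (Finite {p : G.E × G.V // p.2 ∈ G.ends p.1})

variable {G : Multigraph}

/-- The reversal of a dart: same edge, other endpoint. -/
noncomputable def dartFlip (d : G.Dart) : G.Dart :=
  ⟨(d.1.1, Sym2.Mem.other d.2), Sym2.other_mem d.2⟩

/-- A rotation system (combinatorial embedding): a permutation of the darts that fixes
the dart's vertex and acts with a single cycle on the darts at each vertex. -/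
structure RotSystem (G : Multigraph) where
  rot : Equiv.Perm G.Dart
  vx_eq : ∀ d : G.Dart, (rot d).1.2 = d.1.2
  vertex_cycle : ∀ d d' : G.Dart, d.1.2 = d'.1.2 → ∃ n : ℕ, (⇑rot)^[n] d = d'

/-- One step of the face-tracing permutation. -/
noncomputable def RotSystem.faceStep (R : RotSystem G) (d : G.Dart) : G.Dart :=
  R.rot (dartFlip d)

/-- Two darts lie on the same face iff they are related by iterating the face-tracing map. -/
noncomputable def RotSystem.faceSetoid (R : RotSystem G) : Setoid G.Dart :=
  Relation.EqvGen.setoid (fun a b => R.faceStep a = b)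

/-- The faces (with at least one incident edge) of a rotation system. -/
noncomputable def RotSystem.FaceQ (R : RotSystem G) : Type := Quotient R.faceSetoid

/-- The face containing (the corner after) a given dart. -/
noncomputable def RotSystem.faceOf (R : RotSystem G) (d : G.Dart) : R.FaceQ :=
  Quotient.mk R.faceSetoid d

/-- All faces: the dart-faces together with one face for each isolated vertex. -/
noncomputable def RotSystem.Face (R : RotSystem G) : Type :=
  R.FaceQ ⊕ {v : G.V // G.degree v = 0}

/-- Incidence between a face and a vertex. -/
noncomputable def RotSystem.FaceInc (R : RotSystem G) (f : R.Face) (v : G.V) : Prop :=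
  match f with
  | .inl q => ∃ d : G.Dart, d.1.2 = v ∧ R.faceOf d = q
  | .inr x => x.1 = v

/-- Incidence between a face and an edge. -/
noncomputable def RotSystem.FaceIncE (R : RotSystem G) (f : R.Face) (e : G.E) : Prop :=
  match f with
  | .inl q => ∃ d : G.Dart, d.1.1 = e ∧ R.faceOf d = q
  | .inr _ => False

/-- The number of faces of a rotation system. -/
noncomputable def RotSystem.numFaces (R : RotSystem G) : ℕ :=
  Nat.card R.FaceQ + Nat.card {v : G.V // G.degree v = 0}

/-- The number of connected components. -/
noncomputable def numComponents (G : Multigraph) : ℕ :=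
  Nat.card G.toSimpleGraph.ConnectedComponent

/-- A planar embedding: a rotation system satisfying Euler's formula on every
component (equivalently, the stated global identity, since the Euler genus of
every component is nonnegative). -/
structure PlanarEmbedding (G : Multigraph) extends RotSystem G where
  euler : Nat.card G.V + toRotSystem.numFaces = Nat.card G.E + 2 * numComponents G

/-- The dart map induced by a subgraph inclusion. -/
noncomputable def SubgraphOf.dmap {G H : Multigraph} (ι : G.SubgraphOf H) (d : G.Dart) :
    H.Dart :=
  ⟨(ι.emap d.1.1, ι.vmap d.1.2), by
    rw [ι.ends_eq]
    exact Sym2.mem_map.mpr ⟨d.1.2, d.2, rfl⟩⟩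

/-- `RH` restricts to `RG` along the subgraph inclusion `ι`: the rotation of `G` is the
first-return map of the rotation of `H` to the darts of `G`.  This is the formal sense in
which an embedding of a graph `H ⊇ G` extends a given embedding of `G`. -/
noncomputable def RestrictsTo {G H : Multigraph} (ι : G.SubgraphOf H)
    (RH : RotSystem H) (RG : RotSystem G) : Prop :=
  ∀ d : G.Dart, ∃ n : ℕ, 0 < n ∧ (⇑RH.rot)^[n] (ι.dmap d) = ι.dmap (RG.rot d) ∧
    ∀ m : ℕ, 0 < m → m < n → (⇑RH.rot)^[m] (ι.dmap d) ∉ Set.range ι.dmap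

end Multigraph

open Multigraph

/-! ## Augmentation predicates -/

/-- `H` (with data) is a `3`-augmentation of `G`: a planar cubic simple supergraph. -/
def Is3Aug (G H : Multigraph) : Prop :=
  H.Simple ∧ (∀ w : H.V, H.degree w = 3) ∧ Nonempty (PlanarEmbedding H) ∧
    Nonempty (G.SubgraphOf H)

/-- `G` has a `k`-connected `3`-augmentation (variable embedding setting). -/
def HasKConn3Aug (G : Multigraph) (k : ℕ) : Prop :=
  ∃ H : Multigraph, Is3Aug G H ∧ H.KConnected k

/-- `G` has a connected `3`-augmentation (variable embedding setting). -/
def HasConn3Aug (G : Multigraph) : Prop :=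
  ∃ H : Multigraph, Is3Aug G H ∧ H.Connected

/-- `G`, with the planar embedding `emb`, has a `2`-connected `3`-augmentation
extending `emb`. -/
def Has2Conn3AugExt (G : Multigraph) (emb : PlanarEmbedding G) : Prop :=
  ∃ (H : Multigraph) (ι : G.SubgraphOf H) (embH : PlanarEmbedding H),
    H.Simple ∧ (∀ w : H.V, H.degree w = 3) ∧ H.KConnected 2 ∧
      RestrictsTo ι embH.toRotSystem emb.toRotSystem
/-! ## Sub-multigraphs, components, blocks, edge colorings -/

namespace Multigraph

/-- A (combinatorial) subgraph of `G`: a set of vertices and a set of edges whose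
endpoints all belong to the vertex set. -/
structure Subgr (G : Multigraph) where
  Vs : Set G.V
  Es : Set G.E
  compat : ∀ e ∈ Es, ∀ v ∈ G.ends e, v ∈ Vs

/-- The multigraph determined by a combinatorial subgraph. -/
noncomputable def Subgr.toMultigraph {G : Multigraph} (X : Subgr G) : Multigraph where
  V := X.Vs
  E := X.Es
  finV := Subtype.finite
  finE := Subtype.finite
  ends e := (G.ends e.1).attachWith (fun v hv => X.compat e.1 e.2 v hv)
  loopless := by
    intro e h
    apply G.loopless e.1
    have h2 := (Sym2.isDiag_map Subtype.val_injective).mpr h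
    rwa [Sym2.attachWith_map_subtypeVal] at h2

/-- The subgraph spanned by a set of edges. -/
def edgeSpan (G : Multigraph) (S : Set G.E) : Subgr G :=
  ⟨{v | ∃ e ∈ S, v ∈ G.ends e}, S, fun e he v hv => ⟨e, he, hv⟩⟩

/-- The subgraph induced by a connected component. -/
noncomputable def componentSubgraph (G : Multigraph)
    (C : G.toSimpleGraph.ConnectedComponent) : Multigraph :=
  Subgr.toMultigraph
    ⟨{v | G.toSimpleGraph.connectedComponentMk v = C},
     {e | ∀ v ∈ G.ends e, G.toSimpleGraph.connectedComponentMk v = C},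
     fun e he v hv => he v hv⟩

/-- A cut vertex: a vertex whose removal disconnects two vertices that were connected. -/
def IsCutVertex (X : Multigraph) (v : X.V) : Prop :=
  ∃ (x y : X.V) (hx : x ≠ v) (hy : y ≠ v),
    X.toSimpleGraph.Reachable x y ∧
      ¬ (X.toSimpleGraph.induce {w | w ≠ v}).Reachable ⟨x, hx⟩ ⟨y, hy⟩

/-- `S` is the edge set of a block of `G`: an inclusion-maximal `2`-connected
subgraph, or a single bridge. -/
noncomputable def IsBlockSet (G : Multigraph) (S : Set G.E) : Prop :=
  ((edgeSpan G S).toMultigraph.KConnected 2 ∧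
    ∀ S' : Set G.E, S ⊆ S' → (edgeSpan G S').toMultigraph.KConnected 2 → S' = S) ∨
  (∃ e : G.E, S = {e} ∧ G.IsBridge e)

/-- The vertices covered by a set of edges. -/
def blockVerts (X : Multigraph) (S : Set X.E) : Set X.V := {v | ∃ e ∈ S, v ∈ X.ends e}

/-- The number of cut vertices of `X` lying in the block with edge set `S`. -/
noncomputable def nCutInBlock (X : Multigraph) (S : Set X.E) : ℕ :=
  Nat.card {x : X.V // x ∈ blockVerts X S ∧ IsCutVertex X x}

/-- A proper edge coloring with 3 colors. -/
def ThreeEdgeColorable (G : Multigraph) : Prop :=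
  ∃ c : G.E → Fin 3, ∀ e e' : G.E, e ≠ e' →
    (∃ v : G.V, v ∈ G.ends e ∧ v ∈ G.ends e') → c e ≠ c e'

end Multigraph
/-! ## Graph surgeries: adding edges, replacing vertices by gadgets -/

namespace Multigraph

/-- A helper: `pmap` of a non-diagonal pair along a function that is injective on the
relevant proofs is non-diagonal. -/
lemma pmap_not_isDiag {α β : Type*} {P : α → Prop} (f : ∀ a, P a → β)
    (hf : ∀ a ha b hb, f a ha = f b hb → a = b) :
    ∀ (z : Sym2 α) (h : ∀ a ∈ z, P a), ¬ z.IsDiag → ¬ (z.pmap f h).IsDiag := by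
  intro z
  induction' z with a b
  intro h hz hd
  rw [Sym2.pmap_pair, Sym2.mk_isDiag_iff] at hd
  rw [Sym2.mk_isDiag_iff] at hz
  exact hz (hf _ _ _ _ hd)

/-- Add a single new edge between two distinct vertices. -/
def addEdge (G : Multigraph) (u v : G.V) (h : u ≠ v) : Multigraph where
  V := G.V
  E := G.E ⊕ Unit
  finV := G.finV
  finE := inferInstance
  ends := Sum.elim G.ends fun _ => s(u, v)
  loopless := by
    rintro (e | e)
    · exact G.loopless e
    · simpa [Sym2.mk_isDiag_iff] using h

/-- The canonical inclusion of `G` into `G` with an added edge. -/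
def addEdgeSub (G : Multigraph) (u v : G.V) (h : u ≠ v) :
    G.SubgraphOf (addEdge G u v h) where
  vmap := Function.Embedding.refl _
  emap := ⟨Sum.inl, Sum.inl_injective⟩
  ends_eq := fun e => by change G.ends e = (G.ends e).map id; simp

/-- Add a path of length two between two distinct vertices, through a new vertex. -/
def addPath2 (G : Multigraph) (u v : G.V) (_h : u ≠ v) : Multigraph where
  V := G.V ⊕ Unit
  E := G.E ⊕ Fin 2
  finV := inferInstance
  finE := inferInstance
  ends := Sum.elim (fun e => (G.ends e).map Sum.inl)
    (fun i => if i = 0 then s(Sum.inl u, Sum.inr ()) else s(Sum.inl v, Sum.inr ()))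
  loopless := by
    rintro (e | i)
    · intro hd
      exact G.loopless e ((Sym2.isDiag_map Sum.inl_injective).mp hd)
    · by_cases h0 : i = 0 <;> simp [h0, Sym2.mk_isDiag_iff]

open Classical in
/-- Replace a vertex `w` by a gadget graph `K`, re-attaching the edges formerly
incident to `w` to the gadget vertices specified by `att`. -/
noncomputable def replaceVertex (G : Multigraph) (w : G.V) (K : Multigraph)
    (att : {e : G.E // w ∈ G.ends e} → K.V) : Multigraph where
  V := {x : G.V // x ≠ w} ⊕ K.V
  E := G.E ⊕ K.E
  finV := inferInstance
  finE := inferInstance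
  ends := fun e =>
    match e with
    | .inl e =>
        if h : w ∈ G.ends e then
          s(Sum.inl ⟨Sym2.Mem.other h, Sym2.other_ne (G.loopless e) h⟩,
            Sum.inr (att ⟨e, h⟩))
        else
          (G.ends e).pmap (fun x hx => Sum.inl ⟨x, fun hxw => h (hxw ▸ hx)⟩)
            (fun _ hx => hx)
    | .inr k => (K.ends k).map Sum.inr
  loopless := by
    rintro (e | k)
    all_goals dsimp only
    · by_cases h : w ∈ G.ends e
      · rw [dif_pos h]
        simp [Sym2.mk_isDiag_iff]
      · rw [dif_neg h]
        exact pmap_not_isDiag _ (fun a ha b hb hab => by simpa using hab)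
          _ _ (G.loopless e)
    · intro hd
      exact K.loopless k ((Sym2.isDiag_map Sum.inr_injective).mp hd)

/-- The diamond gadget: `K₄` minus one edge; vertices `0` and `1` have degree two. -/
def diamond : Multigraph where
  V := Fin 4
  E := Fin 5
  finV := inferInstance
  finE := inferInstance
  ends := ![s(0, 2), s(0, 3), s(1, 2), s(1, 3), s(2, 3)]
  loopless := by decide

/-- Replace a degree-2 vertex by the diamond gadget (four degree-3 vertices). -/
noncomputable def fixVertex (X : Multigraph) (w : X.V) (h : X.degree w = 2) : Multigraph :=
  replaceVertex X w diamond
    (fun e => Fin.castLE (by omega) ((Finite.equivFinOfCardEq h) e))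

/-- The prism `C_{m+3} □ P₂` with one of its two cycles subdivided: `W_{m+3}`.
The `Sum.inl` vertices are the subdivision vertices (the degree-2 vertices). -/
def wheelGadget (m : ℕ) : Multigraph where
  V := Fin (m + 3) ⊕ Fin (m + 3) × Fin 2
  E := Fin (m + 3) × Fin 4
  finV := inferInstance
  finE := inferInstance
  ends := fun p =>
    if p.2 = 0 then s(Sum.inl p.1, Sum.inr (p.1, 0))
    else if p.2 = 1 then s(Sum.inl p.1, Sum.inr (p.1 + 1, 0))
    else if p.2 = 2 then s(Sum.inr (p.1, 1), Sum.inr (p.1 + 1, 1))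
    else s(Sum.inr (p.1, 0), Sum.inr (p.1, 1))
  loopless := by
    intro p
    have hne : p.1 ≠ p.1 + 1 := by
      intro h
      have h1 : (0 : Fin (m + 3)) = 1 := by
        have := left_eq_add.mp h
        exact this.symm
      have := congrArg Fin.val h1
      simp [Fin.val_zero, Fin.val_one] at this
    by_cases h0 : p.2 = 0
    · simp [h0, Sym2.mk_isDiag_iff]
    · by_cases h1 : p.2 = 1
      · simp [h0, h1, Sym2.mk_isDiag_iff]
      · by_cases h2 : p.2 = 2
        · simp [h0, h1, h2, Sym2.mk_isDiag_iff, Prod.ext_iff, hne]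
        · simp [h0, h1, h2, Sym2.mk_isDiag_iff, Prod.ext_iff]

/-- The wheel-extension of `G` at the degree-`(m+3)` vertex `v`, given a bijection `φ`
between the edges at `v` and the subdivision vertices of `W_{m+3}`. -/
noncomputable def wheelExtension (G : Multigraph) (v : G.V) (m : ℕ)
    (φ : {e : G.E // v ∈ G.ends e} ≃ Fin (m + 3)) : Multigraph :=
  replaceVertex G v (wheelGadget m) (fun e => Sum.inl (φ e))

/-- `G'` is obtained from `G` by a wheel-extension at `v`. -/
noncomputable def IsWheelExtension (G : Multigraph) (v : G.V) (G' : Multigraph) : Prop :=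
  ∃ (m : ℕ) (φ : {e : G.E // v ∈ G.ends e} ≃ Fin (m + 3)),
    Nonempty (G'.Iso (wheelExtension G v m φ))

end Multigraph
/-! ## Subdivisions and pendant vertices; more surgeries -/

namespace Multigraph

lemma out_ne (G : Multigraph) (e : G.E) : (G.ends e).out.1 ≠ (G.ends e).out.2 := by
  intro h
  apply G.loopless e
  rw [← (G.ends e).out_eq]
  exact Sym2.mk_isDiag_iff.mpr h

/-- The `j`-th node on the subdivided edge `e` (where edge `e` is subdivided by
`k e` new vertices):  `j = 0` is one endpoint, `j = k e + 1` is the other endpoint,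
the nodes in between are the subdivision vertices. -/
noncomputable def subdivNode (R : Multigraph) (k : R.E → ℕ) (e : R.E) (j : ℕ) :
    R.V ⊕ (Σ e : R.E, Fin (k e)) :=
  if h0 : j = 0 then Sum.inl (R.ends e).out.1
  else if h : j ≤ k e then Sum.inr ⟨e, ⟨j - 1, by omega⟩⟩
  else Sum.inl (R.ends e).out.2

/-- The subdivision of `R` in which each edge `e` is subdivided by `k e` new vertices. -/
noncomputable def subdivision (R : Multigraph) (k : R.E → ℕ) : Multigraph where
  V := R.V ⊕ (Σ e : R.E, Fin (k e))
  E := Σ e : R.E, Fin (k e + 1)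
  finV := inferInstance
  finE := inferInstance
  ends := fun p => s(subdivNode R k p.1 p.2.val, subdivNode R k p.1 (p.2.val + 1))
  loopless := by
    intro p hd
    rw [Sym2.mk_isDiag_iff] at hd
    have hi : p.2.val ≤ k p.1 := Nat.lt_succ_iff.mp p.2.isLt
    unfold subdivNode at hd
    split_ifs at hd <;>
      first
        | omega
        | (simp only [Sum.inl.injEq] at hd; exact R.out_ne p.1 hd)
        | (simp only [Sum.inr.injEq, Sigma.mk.inj_iff, heq_eq_eq, Fin.mk.injEq,
            true_and] at hd; omega)
        | exact False.elim (by assumption)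
        | simp at hd

/-- Attach a new pendant (degree-1) vertex to every subdivision vertex of the
subdivision of `R` given by `k`. -/
noncomputable def pendantSubdivision (R : Multigraph) (k : R.E → ℕ) : Multigraph where
  V := (R.V ⊕ (Σ e : R.E, Fin (k e))) ⊕ (Σ e : R.E, Fin (k e))
  E := (Σ e : R.E, Fin (k e + 1)) ⊕ (Σ e : R.E, Fin (k e))
  finV := inferInstance
  finE := inferInstance
  ends := Sum.elim (fun p => ((subdivision R k).ends p).map Sum.inl)
    (fun st => s(Sum.inl (Sum.inr st), Sum.inr st))
  loopless := by
    rintro (p | st)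
    · intro hd
      exact (subdivision R k).loopless p ((Sym2.isDiag_map Sum.inl_injective).mp hd)
    · simp [Sym2.mk_isDiag_iff]

/-- Delete the edge `e = xy` and attach two new pendant vertices `u` (to `x`) and
`v` (to `y`); the construction producing the `uv`-graph in Lemma 4.5. -/
noncomputable def detachEdge (G : Multigraph) (e : G.E) (x y : G.V) : Multigraph where
  V := G.V ⊕ Fin 2
  E := {e' : G.E // e' ≠ e} ⊕ Fin 2
  finV := inferInstance
  finE := inferInstance
  ends := Sum.elim (fun e' => (G.ends e'.1).map Sum.inl)
    (fun i => if i = 0 then s(Sum.inr 0, Sum.inl x) else s(Sum.inr 1, Sum.inl y))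
  loopless := by
    rintro (e' | i)
    · intro hd
      exact G.loopless e'.1 ((Sym2.isDiag_map Sum.inl_injective).mp hd)
    · by_cases h0 : i = 0 <;> simp [h0, Sym2.mk_isDiag_iff]

/-- Add the edge `uv` and then replace each of `u`, `v` that now has degree `2`
by the diamond gadget.  (The graph `G⁺` of Lemma 4.7, first item.) -/
noncomputable def addEdgeFix (G : Multigraph) (u v : G.V) (h : u ≠ v) : Multigraph :=
  let H1 := addEdge G u v h
  let p : Σ' (H : Multigraph), H.V :=
    if hu : H1.degree u = 2 then ⟨fixVertex H1 u hu, Sum.inl ⟨v, h.symm⟩⟩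
    else ⟨H1, v⟩
  if hv : p.1.degree p.2 = 2 then fixVertex p.1 p.2 hv else p.1

/-- Add a path `u - w - v` of length two and then replace each of `u`, `v` that now
has degree `2` by the diamond gadget.  (The graph `G⁺` of Lemma 4.7, second item.) -/
noncomputable def addPath2Fix (G : Multigraph) (u v : G.V) (h : u ≠ v) : Multigraph :=
  let H1 := addPath2 G u v h
  let p : Σ' (H : Multigraph), H.V :=
    if hu : H1.degree (Sum.inl u) = 2 then
      ⟨fixVertex H1 (Sum.inl u) hu, Sum.inl ⟨Sum.inl v, fun hh => h.symm (Sum.inl.inj hh)⟩⟩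
    else ⟨H1, Sum.inl v⟩
  if hv : p.1.degree p.2 = 2 then fixVertex p.1 p.2 hv else p.1

end Multigraph
/-! ## Faces of an embedding: incidences, face subgraphs, connecting faces -/

namespace Multigraph

namespace RotSystem

variable {G : Multigraph} (R : RotSystem G)

lemma faceOf_faceStep (d : G.Dart) : R.faceOf (R.faceStep d) = R.faceOf d := by
  refine (Quotient.sound ?_).symm
  exact Relation.EqvGen.rel d (R.faceStep d) rfl

/-- The subgraph of `G` on the vertices and edges incident to the face `f`. -/
noncomputable def faceSubgr (f : R.Face) : Subgr G where
  Vs := {v | R.FaceInc f v}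
  Es := {e | R.FaceIncE f e}
  compat := by
    intro e he v hv
    cases f with
    | inr x => exact False.elim he
    | inl q =>
      obtain ⟨d, hde, hdq⟩ := he
      subst hde
      have hmem : v ∈ s(d.1.2, Sym2.Mem.other d.2) := by
        rw [Sym2.other_spec d.2]; exact hv
      rcases Sym2.mem_iff.mp hmem with h | h
      · exact ⟨d, h.symm, hdq⟩
      · refine ⟨R.rot (dartFlip d), ?_, ?_⟩
        · rw [R.vx_eq (dartFlip d)]
          exact h.symm
        · have : R.faceOf (R.faceStep d) = q := by
            rw [R.faceOf_faceStep]; exact hdq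
          exact this

/-- The face graph `G_f`. -/
noncomputable def faceGraph (f : R.Face) : Multigraph := (R.faceSubgr f).toMultigraph

/-- A connecting face: one incident to at least two connected components of `G`, or
the unique face incident to both sides of some bridge of `G`. -/
noncomputable def ConnectingFace (f : R.Face) : Prop :=
  (∃ x y : G.V, R.FaceInc f x ∧ R.FaceInc f y ∧
      G.toSimpleGraph.connectedComponentMk x ≠ G.toSimpleGraph.connectedComponentMk y) ∨
  (∃ e : G.E, G.IsBridge e ∧ ∃ d d' : G.Dart, d.1.1 = e ∧ d'.1.1 = e ∧ d.1.2 ≠ d'.1.2 ∧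
      (Sum.inl (R.faceOf d) : R.Face) = f ∧ (Sum.inl (R.faceOf d') : R.Face) = f)

end RotSystem

end Multigraph

/-! ## `uv`-graphs, inner augmentations, labels -/

open Multigraph

/-- `(G, u, v)` is a `uv`-graph: connected, subcubic, with two distinguished vertices
of degree at most two. -/
noncomputable def IsUVGraph (G : Multigraph) (u v : G.V) : Prop :=
  G.Connected ∧ (∀ w : G.V, G.degree w ≤ 3) ∧ G.degree u ≤ 2 ∧ G.degree v ≤ 2 ∧ u ≠ v

/-- An inner augmentation of the `uv`-graph `(G, u, v)` with the embedding `emb`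
whose outer face is `outer`. -/
structure InnerAug (G : Multigraph) (u v : G.V) (emb : PlanarEmbedding G)
    (outer : emb.toRotSystem.Face) where
  H : Multigraph
  conn : H.Connected
  ι : G.SubgraphOf H
  embH : PlanarEmbedding H
  outerH : embH.toRotSystem.Face
  /-- the embedding of `H` extends the given embedding of `G` -/
  ext : RestrictsTo ι embH.toRotSystem emb.toRotSystem
  /-- the outer face of `H` lies in the outer face of `G` -/
  outer_compat : ∀ d : G.Dart,
    (Sum.inl (embH.toRotSystem.faceOf (ι.dmap d)) : embH.toRotSystem.Face) = outerH →
    (Sum.inl (emb.toRotSystem.faceOf d) : emb.toRotSystem.Face) = outer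
  u_outer : embH.toRotSystem.FaceInc outerH (ι.vmap u)
  v_outer : embH.toRotSystem.FaceInc outerH (ι.vmap v)
  deg_u : H.degree (ι.vmap u) = G.degree u
  deg_v : H.degree (ι.vmap v) = G.degree v
  deg13 : ∀ w : H.V, w ≠ ι.vmap u → w ≠ ι.vmap v → H.degree w = 1 ∨ H.degree w = 3
  pendant_outer : ∀ w : H.V, H.degree w = 1 → embH.toRotSystem.FaceInc outerH w
  bridges : ∀ eH : H.E, H.IsBridge eH →
    (¬ ∃ eG : G.E, ι.emap eG = eH ∧ G.IsBridge eG) →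
    ∃ x : H.V, x ∈ H.ends eH ∧ H.degree x = 1

/-- The dart of the added `uv`-edge at `u`. -/
noncomputable def addEdgeDartL (G : Multigraph) (u v : G.V) (h : u ≠ v) :
    (addEdge G u v h).Dart :=
  ⟨(Sum.inr (), u), Sym2.mem_mk_left u v⟩

/-- The dart of the added `uv`-edge at `v`. -/
noncomputable def addEdgeDartR (G : Multigraph) (u v : G.V) (h : u ≠ v) :
    (addEdge G u v h).Dart :=
  ⟨(Sum.inr (), v), Sym2.mem_mk_right u v⟩

/-- `d(H, 𝓔_H) = (a, b)`: inserting the hypothetical edge `e_uv` from `u` to `v` into the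
outer face of the embedding of `H` splits it into two faces, one on each side of `e_uv`
(the faces traced from the two darts of `e_uv`), containing `a` resp. `b` of the degree-1
vertices of `H`. -/
noncomputable def InnerAug.sides {G : Multigraph} {u v : G.V} {emb : PlanarEmbedding G}
    {outer : emb.toRotSystem.Face} (A : InnerAug G u v emb outer) (huv : u ≠ v)
    (a b : ℕ) : Prop :=
  let hne : A.ι.vmap u ≠ A.ι.vmap v := fun hh => huv (A.ι.vmap.injective hh)
  let Hp := addEdge A.H (A.ι.vmap u) (A.ι.vmap v) hne
  let ιp := addEdgeSub A.H (A.ι.vmap u) (A.ι.vmap v) hne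
  let dU := addEdgeDartL A.H (A.ι.vmap u) (A.ι.vmap v) hne
  let dV := addEdgeDartR A.H (A.ι.vmap u) (A.ι.vmap v) hne
  ∃ embP : PlanarEmbedding Hp,
    RestrictsTo ιp embP.toRotSystem A.embH.toRotSystem ∧
    -- the new edge is inserted into the outer face: the outer face splits into the
    -- two faces on the two sides of the new edge
    (∀ d : A.H.Dart,
      (Sum.inl (A.embH.toRotSystem.faceOf d) : A.embH.toRotSystem.Face) = A.outerH →
        embP.toRotSystem.faceOf (ιp.dmap d) = embP.toRotSystem.faceOf dU ∨
        embP.toRotSystem.faceOf (ιp.dmap d) = embP.toRotSystem.faceOf dV) ∧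
    a = Nat.card {w : A.H.V // A.H.degree w = 1 ∧
          ∃ dp : Hp.Dart, dp.1.2 = w ∧
            embP.toRotSystem.faceOf dp = embP.toRotSystem.faceOf dU} ∧
    b = Nat.card {w : A.H.V // A.H.degree w = 1 ∧
          ∃ dp : Hp.Dart, dp.1.2 = w ∧
            embP.toRotSystem.faceOf dp = embP.toRotSystem.faceOf dV}

/-- `(G, u, v)` with embedding `emb` and outer face `outer` admits an inner augmentation
with `d(H, 𝓔_H) = (a, b)`. -/
noncomputable def realizes (G : Multigraph) (u v : G.V) (emb : PlanarEmbedding G)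
    (outer : emb.toRotSystem.Face) (a b : ℕ) : Prop :=
  ∃ (huv : u ≠ v) (A : InnerAug G u v emb outer), A.sides huv a b

/-- The embedded label set `LSemb(G_uv, 𝓔_uv)`. -/
noncomputable def LSemb (G : Multigraph) (u v : G.V) (emb : PlanarEmbedding G)
    (outer : emb.toRotSystem.Face) : Set (ℕ × ℕ) :=
  {p | p.1 ≤ 1 ∧ p.2 ≤ 1 ∧ realizes G u v emb outer p.1 p.2}

/-- The variable label set `LSvar(G_uv)`: the union of the embedded label sets over all
planar embeddings of `G` having `u` and `v` on the outer face. -/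
noncomputable def LSvar (G : Multigraph) (u v : G.V) : Set (ℕ × ℕ) :=
  {p | ∃ (emb : PlanarEmbedding G) (outer : emb.toRotSystem.Face),
    emb.toRotSystem.FaceInc outer u ∧ emb.toRotSystem.FaceInc outer v ∧
    p ∈ LSemb G u v emb outer}

/-- The dart of `P` corresponding to a dart of `G` at a core vertex. -/
noncomputable def coreDart {G P : Multigraph} {u v : G.V} (em : G.E ↪ P.E)
    (vm : {x : G.V // x ≠ u ∧ x ≠ v} ↪ P.V)
    (hc : ∀ (e : G.E) (x : G.V), x ∈ G.ends e → ∀ (hxu : x ≠ u) (hxv : x ≠ v),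
        vm ⟨x, hxu, hxv⟩ ∈ P.ends (em e))
    (d : G.Dart) (hdu : d.1.2 ≠ u) (hdv : d.1.2 ≠ v) : P.Dart :=
  ⟨(em d.1.1, vm ⟨d.1.2, hdu, hdv⟩), hc d.1.1 d.1.2 d.2 hdu hdv⟩

/-- The planar embedding `embP` of `P` agrees with the given embedding `emb` of `G` on
the common core (`G` minus the special vertices `u, v`): there are endpoint-compatible
injections of the edges of `G` and of the vertices of `G` other than `u, v` into `P`
such that the rotation of `emb` at the surviving darts is the first-return map of the
rotation of `embP`. -/
noncomputable def CoreExtends (G : Multigraph) (u v : G.V) (emb : PlanarEmbedding G)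
    (P : Multigraph) (embP : PlanarEmbedding P) : Prop :=
  ∃ (em : G.E ↪ P.E) (vm : {x : G.V // x ≠ u ∧ x ≠ v} ↪ P.V),
    ∃ hc : (∀ (e : G.E) (x : G.V), x ∈ G.ends e → ∀ (hxu : x ≠ u) (hxv : x ≠ v),
        vm ⟨x, hxu, hxv⟩ ∈ P.ends (em e)),
    ∀ (d : G.Dart) (hdu : d.1.2 ≠ u) (hdv : d.1.2 ≠ v),
      ∃ n : ℕ, 0 < n ∧
        (⇑embP.toRotSystem.rot)^[n] (coreDart em vm hc d hdu hdv) =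
          coreDart em vm hc (emb.toRotSystem.rot d)
            (by rw [emb.toRotSystem.vx_eq]; exact hdu)
            (by rw [emb.toRotSystem.vx_eq]; exact hdv) ∧
        ∀ m : ℕ, 0 < m → m < n →
          ∀ (d' : G.Dart) (h1 : d'.1.2 ≠ u) (h2 : d'.1.2 ≠ v),
            (⇑embP.toRotSystem.rot)^[m] (coreDart em vm hc d hdu hdv) ≠
              coreDart em vm hc d' h1 h2

/-- `(P, u, v)` (with the inclusion `ι`) is a pertinent-like subgraph of `G`: a connected
subcubic subgraph meeting the rest of `G` only in the two poles `u, v`, which have degree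
at most `2` inside `P`.  The pertinent graphs `pert(μ)` of the vertices `μ` of the
SPQR-tree of `G` (rooted at a Q-vertex) are exactly of this form. -/
noncomputable def IsPertinent (G P : Multigraph) (u v : P.V) (ι : P.SubgraphOf G) : Prop :=
  P.Connected ∧ u ≠ v ∧ P.degree u ≤ 2 ∧ P.degree v ≤ 2 ∧
    (∃ e : G.E, e ∉ Set.range ι.emap) ∧
    ∀ e : G.E, e ∉ Set.range ι.emap →
      ∀ x : P.V, ι.vmap x ∈ G.ends e → x = u ∨ x = v
/-! ## The Generalized Factor instance of Lemma 3.2 -/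

namespace Multigraph

namespace RotSystem

variable {G : Multigraph} (R : RotSystem G)

/-- The blocks of the face graph `G_f`. -/
noncomputable def FaceBlocks (f : R.Face) : Type :=
  {S : Set (R.faceGraph f).E // IsBlockSet (R.faceGraph f) S}

/-- The vertex set of the Generalized Factor instance `A`:
the degree-2 vertices `𝒱` of `G`, together with `ℱ` = (normal faces) ⊎ (blocks of the
face graphs of connecting faces). -/
noncomputable def GFVert : Type :=
  {v : G.V // G.degree v = 2} ⊕
    ({f : R.Face // ¬ R.ConnectingFace f} ⊕
      (Σ f : {f : R.Face // R.ConnectingFace f}, R.FaceBlocks f.1))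

/-- One-sided adjacency of the instance `A`: a degree-2 vertex is adjacent to a normal
face it is incident to, and to a block containing it. -/
noncomputable def GFAdjL : R.GFVert → R.GFVert → Prop := fun x y =>
  match x, y with
  | .inl vv, .inr (.inl ff) => R.FaceInc ff.1 vv.1
  | .inl vv, .inr (.inr fS) => ∃ e, e ∈ fS.2.1 ∧ vv.1 ∈ G.ends e.1
  | _, _ => False

/-- The bipartite graph `A` of the Generalized Factor instance. -/
noncomputable def GFGraph : SimpleGraph R.GFVert where
  Adj x y := R.GFAdjL x y ∨ R.GFAdjL y x
  symm := ⟨fun _ _ h => h.symm⟩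
  loopless := by
    refine ⟨?_⟩
    rintro (vv | (ff | fS)) (h | h) <;> exact h

/-- The degree of a vertex in a graph on the vertex set of `A`. -/
noncomputable def degA (A' : SimpleGraph R.GFVert) (x : R.GFVert) : ℕ :=
  Nat.card {y : R.GFVert // A'.Adj x y}

/-- The prescribed degree sets `B(x)` of the Generalized Factor instance. -/
noncomputable def Bset : R.GFVert → Set ℕ := fun x =>
  match x with
  | .inl vv => {1}
  | .inr (.inl ff) => insert 0 (Set.Icc 2 (R.degA R.GFGraph (.inr (.inl ff))))
  | .inr (.inr fS) =>
      if nCutInBlock (R.faceGraph fS.1.1) fS.2.1 = 0 then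
        -- singleton block
        Set.Icc 2 (R.degA R.GFGraph (.inr (.inr fS)))
      else if nCutInBlock (R.faceGraph fS.1.1) fS.2.1 = 1 then
        -- leaf block
        Set.Icc 1 (R.degA R.GFGraph (.inr (.inr fS)))
      else
        -- inner block
        Set.Iic (R.degA R.GFGraph (.inr (.inr fS)))

/-- The instance `A` admits a `B`-factor: a spanning subgraph with all degrees in the
prescribed sets. -/
noncomputable def HasBFactor : Prop :=
  ∃ A' : SimpleGraph R.GFVert, A' ≤ R.GFGraph ∧ ∀ x : R.GFVert, R.degA A' x ∈ R.Bset x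

end RotSystem

end Multigraph

open Multigraph

/-!
STATEMENT 7: The Generalized Factor instance `A` has order and size linear in `n`:
every `v ∈ 𝒱` is adjacent in `A` to at most six block vertices and at most two
normal-face vertices, `A` has at most `8n` edges, and `O(n)` vertices.
-/
/-! ## Auxiliary machinery for the linear-size proof -/

namespace LinearSize

open Multigraph

/-- Counting lemma: a total, co-injective relation gives a cardinality bound. -/
lemma card_le_of_rel {α β : Type*} [Finite β] (r : α → β → Prop)
    (htot : ∀ a, ∃ b, r a b) (hinj : ∀ a a' b, r a b → r a' b → a = a') :
    Nat.card α ≤ Nat.card β := by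
  refine Nat.card_le_card_of_injective (fun a => (htot a).choose) ?_
  intro a a' h
  exact hinj a a' _ (htot a).choose_spec (by rw [show (htot a).choose = _ from h]; exact (htot a').choose_spec)

lemma mem_out {α : Type*} {z : Sym2 α} {w : α} (h : w ∈ z) :
    w = z.out.1 ∨ w = z.out.2 := by
  rw [← z.out_eq] at h
  exact Sym2.mem_iff.mp h

variable {X : Multigraph}

/-- The simple graph on the vertices of `X` given by edges in `S`, avoiding
the vertex set `A`. -/
def auxG (X : Multigraph) (S : Set X.E) (A : Set X.V) : SimpleGraph X.V where
  Adj a b := a ≠ b ∧ a ∉ A ∧ b ∉ A ∧ ∃ e ∈ S, X.ends e = s(a, b)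
  symm := by
    refine ⟨?_⟩
    rintro a b ⟨h1, h2, h3, e, he, hse⟩
    exact ⟨h1.symm, h3, h2, e, he, by rw [hse, Sym2.eq_swap]⟩
  loopless := ⟨fun a h => h.1 rfl⟩

lemma auxG_mono {S S' : Set X.E} {A A' : Set X.V} (hS : S ⊆ S') (hA : A' ⊆ A) :
    auxG X S A ≤ auxG X S' A' := by
  rintro a b ⟨h1, h2, h3, e, he, hse⟩
  exact ⟨h1, fun h => h2 (hA h), fun h => h3 (hA h), e, hS he, hse⟩

lemma auxG_reach_strengthen {S : Set X.E} {A0 A1 : Set X.V} {a b : X.V}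
    (h : (auxG X S A0).Reachable a b)
    (hA1 : ∀ v ∈ A1, v ∈ blockVerts X S → v ∈ A0)
    (ha : a ∉ A1) (hb : b ∉ A1) : (auxG X S (A0 ∪ A1)).Reachable a b := by
  obtain ⟨w⟩ := h
  clear hb
  revert ha
  induction w with
  | nil => exact fun _ => SimpleGraph.Reachable.refl _
  | @cons u c _ had p ih =>
    intro ha
    obtain ⟨hne, huA, hcA, e, heS, hse⟩ := had
    have hcV : c ∈ blockVerts X S := ⟨e, heS, by rw [hse]; exact Sym2.mem_mk_right _ _⟩
    have hc1 : c ∉ A1 := fun h => hcA (hA1 c h hcV)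
    have hadj : (auxG X S (A0 ∪ A1)).Adj u c :=
      ⟨hne, fun h => h.elim huA ha, fun h => h.elim hcA hc1, e, heS, hse⟩
    exact hadj.reachable.trans (ih hc1)

lemma span_ends_val {S : Set X.E} (e1 : ((edgeSpan X S).toMultigraph).E) :
    Sym2.map Subtype.val (((edgeSpan X S).toMultigraph).ends e1) = X.ends e1.1 :=
  Sym2.attachWith_map_subtypeVal _

lemma induce_reach_to_aux {S : Set X.E}
    {T : Set ((edgeSpan X S).toMultigraph).V} {p q : ↥(Tᶜ)}
    (h : (((edgeSpan X S).toMultigraph).toSimpleGraph.induce (Tᶜ)).Reachable p q) :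
    (auxG X S (Subtype.val '' T)).Reachable p.1.1 q.1.1 := by
  have key : ∀ {x y : ↥(Tᶜ)},
      (((edgeSpan X S).toMultigraph).toSimpleGraph.induce (Tᶜ)).Adj x y →
      (auxG X S (Subtype.val '' T)).Adj x.1.1 y.1.1 := by
    rintro ⟨u, hu⟩ ⟨v, hv⟩ hadj
    obtain ⟨hne, e1, hends⟩ := hadj
    have hXe : X.ends e1.1 = s(u.1, v.1) := by
      have h2 := congrArg (Sym2.map Subtype.val) hends
      rw [span_ends_val] at h2
      exact h2.trans (Sym2.map_pair_eq _ _ _)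
    refine ⟨fun h => hne (Subtype.ext h), ?_, ?_, e1.1, e1.2, hXe⟩
    · rintro ⟨t, htT, hval⟩
      exact hu (by rwa [Subtype.ext hval] at htT)
    · rintro ⟨t, htT, hval⟩
      exact hv (by rwa [Subtype.ext hval] at htT)
  exact SimpleGraph.Reachable.map ⟨fun y => y.1.1, key⟩ h

lemma aux_reach_to_induce {S : Set X.E}
    {T : Set ((edgeSpan X S).toMultigraph).V} {a b : X.V}
    (h : (auxG X S (Subtype.val '' T)).Reachable a b)
    (ha : a ∈ blockVerts X S) (hb : b ∈ blockVerts X S)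
    (haT : (⟨a, ha⟩ : ((edgeSpan X S).toMultigraph).V) ∉ T)
    (hbT : (⟨b, hb⟩ : ((edgeSpan X S).toMultigraph).V) ∉ T) :
    (((edgeSpan X S).toMultigraph).toSimpleGraph.induce (Tᶜ)).Reachable
      ⟨⟨a, ha⟩, haT⟩ ⟨⟨b, hb⟩, hbT⟩ := by
  obtain ⟨w⟩ := h
  revert ha haT
  induction w with
  | nil =>
    intros
    exact SimpleGraph.Reachable.refl _
  | @cons u c _ had p ih =>
    intro ha haT
    obtain ⟨hne, huA, hcA, e, heS, hse⟩ := had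
    have hcV : c ∈ blockVerts X S := ⟨e, heS, by rw [hse]; exact Sym2.mem_mk_right _ _⟩
    have hcT : (⟨c, hcV⟩ : ((edgeSpan X S).toMultigraph).V) ∉ T := by
      intro hmem
      exact hcA ⟨⟨c, hcV⟩, hmem, rfl⟩
    have hadj : (((edgeSpan X S).toMultigraph).toSimpleGraph.induce (Tᶜ)).Adj
        ⟨⟨u, ha⟩, haT⟩ ⟨⟨c, hcV⟩, hcT⟩ := by
      show ((edgeSpan X S).toMultigraph).toSimpleGraph.Adj ⟨u, ha⟩ ⟨c, hcV⟩
      refine ⟨fun h => hne (congrArg Subtype.val h), ⟨e, heS⟩, ?_⟩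
      apply Sym2.map.injective Subtype.val_injective
      exact (span_ends_val _).trans (hse.trans (Sym2.map_pair_eq Subtype.val (⟨u, ha⟩ : ((edgeSpan X S).toMultigraph).V) ⟨c, hcV⟩).symm)
    first
      | exact hadj.reachable.trans (ih hb hbT hcV hcT)
      | exact hadj.reachable.trans (ih hcV hcT)

lemma kconn_reachAvoid {S : Set X.E}
    (hK : ((edgeSpan X S).toMultigraph).KConnected 2) (A : Set X.V)
    (hA : Nat.card ↥A ≤ 1) {a b : X.V}
    (ha : a ∈ blockVerts X S) (hb : b ∈ blockVerts X S)
    (ha' : a ∉ A) (hb' : b ∉ A) : (auxG X S A).Reachable a b := by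
  classical
  set T : Set ((edgeSpan X S).toMultigraph).V := {y | y.1 ∈ A} with hTdef
  have hTcard : Nat.card ↥T < 2 := by
    have hle : Nat.card ↥T ≤ Nat.card ↥A :=
      Nat.card_le_card_of_injective (fun y => ⟨y.1.1, y.2⟩) (by
        intro y y' h
        have h2 := congrArg (fun z : ↥A => z.1) h
        exact Subtype.ext (Subtype.ext h2))
    omega
  have hconn := hK.2 T hTcard
  have haT : (⟨a, ha⟩ : ((edgeSpan X S).toMultigraph).V) ∉ T := ha'
  have hbT : (⟨b, hb⟩ : ((edgeSpan X S).toMultigraph).V) ∉ T := hb'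
  have hreach := hconn.preconnected ⟨⟨a, ha⟩, haT⟩ ⟨⟨b, hb⟩, hbT⟩
  have h1 := induce_reach_to_aux (p := ⟨⟨a, ha⟩, haT⟩) (q := ⟨⟨b, hb⟩, hbT⟩) hreach
  have h2 := auxG_reach_strengthen (A1 := A) h1
    (fun v hv hvV => ⟨⟨v, hvV⟩, hv, rfl⟩) ha' hb'
  exact h2.mono (auxG_mono subset_rfl Set.subset_union_right)

lemma union_kconn {S1 S2 : Set X.E}
    (h1 : ((edgeSpan X S1).toMultigraph).KConnected 2)
    (h2 : ((edgeSpan X S2).toMultigraph).KConnected 2)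
    {e : X.E} (he1 : e ∈ S1) (he2 : e ∈ S2) :
    ((edgeSpan X (S1 ∪ S2)).toMultigraph).KConnected 2 := by
  classical
  have hbv1 : blockVerts X S1 ⊆ blockVerts X (S1 ∪ S2) := by
    rintro v ⟨e', h, hm⟩
    exact ⟨e', Or.inl h, hm⟩
  have hcard : 2 < Nat.card ((edgeSpan X (S1 ∪ S2)).toMultigraph).V := by
    refine lt_of_lt_of_le h1.1 (Nat.card_le_card_of_injective
      (fun v => (⟨v.1, hbv1 v.2⟩ : ((edgeSpan X (S1 ∪ S2)).toMultigraph).V)) ?_)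
    intro v v' h
    have h2 := congrArg (fun z : ((edgeSpan X (S1 ∪ S2)).toMultigraph).V => z.1) h
    exact Subtype.ext h2
  refine ⟨hcard, fun T hT => ?_⟩
  set A : Set X.V := Subtype.val '' T with hAdef
  have hAcard : Nat.card ↥A ≤ 1 := by
    have h' : Nat.card ↥(Subtype.val '' T) = Nat.card ↥T :=
      Nat.card_image_of_injective Subtype.val_injective T
    rw [hAdef]
    exact (le_of_eq h').trans (by omega)
  have hxm : (X.ends e).out.1 ∈ X.ends e := Sym2.out_fst_mem _
  have hym : (X.ends e).out.2 ∈ X.ends e := Sym2.out_snd_mem _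
  have hxy : (X.ends e).out.1 ≠ (X.ends e).out.2 := X.out_ne e
  have hz : ∃ z, z ∈ X.ends e ∧ z ∉ A := by
    by_contra hcon
    push_neg at hcon
    have hsub : {(X.ends e).out.1, (X.ends e).out.2} ⊆ A := by
      rintro w (rfl | rfl)
      exacts [hcon _ hxm, hcon _ hym]
    have h2' : 2 ≤ Nat.card ↥A := by
      rw [Nat.card_coe_set_eq]
      calc 2 = ({(X.ends e).out.1, (X.ends e).out.2} : Set X.V).ncard :=
            (Set.ncard_pair hxy).symm
        _ ≤ A.ncard := Set.ncard_le_ncard hsub (Set.toFinite A)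
    omega
  obtain ⟨z, hzm, hzA⟩ := hz
  have hz1 : z ∈ blockVerts X S1 := ⟨e, he1, hzm⟩
  have hz2 : z ∈ blockVerts X S2 := ⟨e, he2, hzm⟩
  have key : ∀ p : ((edgeSpan X (S1 ∪ S2)).toMultigraph).V, p ∉ T →
      (auxG X (S1 ∪ S2) A).Reachable p.1 z := by
    intro p hp
    have hpA : p.1 ∉ A := by
      rintro ⟨t, ht, hval⟩
      exact hp (by rwa [Subtype.ext hval] at ht)
    obtain ⟨e', he'm, hm⟩ := p.2
    rcases he'm with hc1 | hc2
    · exact (kconn_reachAvoid h1 A hAcard ⟨e', hc1, hm⟩ hz1 hpA hzA).mono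
        (auxG_mono Set.subset_union_left subset_rfl)
    · exact (kconn_reachAvoid h2 A hAcard ⟨e', hc2, hm⟩ hz2 hpA hzA).mono
        (auxG_mono Set.subset_union_right subset_rfl)
  have hne : Nonempty ↥(Tᶜ) := by
    by_contra hcon
    have hall : ∀ y, y ∈ T := by
      intro y
      by_contra hy
      exact hcon ⟨⟨y, hy⟩⟩
    have huniv : T = Set.univ := Set.eq_univ_iff_forall.mpr hall
    rw [huniv] at hT
    rw [Nat.card_univ] at hT
    omega
  refine ⟨?_⟩
  rintro ⟨p, hp⟩ ⟨q, hq⟩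
  have hr := (key p hp).trans (key q hq).symm
  exact aux_reach_to_induce hr p.2 q.2 hp hq

lemma auxG_avoid_le_del {S : Set X.E} {e : X.E} {w : X.V} (hw : w ∈ X.ends e) :
    auxG X S {w} ≤ auxG X (S \ {e}) ∅ := by
  rintro a b ⟨hne, haA, hbA, e', he', hse'⟩
  refine ⟨hne, fun h => h, fun h => h, e', ⟨he', ?_⟩, hse'⟩
  rintro rfl
  rw [hse'] at hw
  rcases Sym2.mem_iff.mp hw with rfl | rfl
  · exact haA rfl
  · exact hbA rfl

lemma reach_split {S : Set X.E} {e : X.E} {x y : X.V} (hends : X.ends e = s(x, y))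
    {a c : X.V} (h : (auxG X S ∅).Reachable a c) (hc : c = x ∨ c = y) :
    (auxG X (S \ {e}) ∅).Reachable a x ∨ (auxG X (S \ {e}) ∅).Reachable a y := by
  obtain ⟨w⟩ := h
  revert hc
  induction w with
  | nil =>
    rintro (rfl | rfl)
    · exact Or.inl (SimpleGraph.Reachable.refl _)
    · exact Or.inr (SimpleGraph.Reachable.refl _)
  | @cons u c' _ had p ih =>
    intro hc
    obtain ⟨hne, -, -, e', he', hse'⟩ := had
    by_cases hee : e' = e
    · subst hee
      have heq : s(u, c') = s(x, y) := hse'.symm.trans hends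
      rcases Sym2.eq_iff.mp heq with ⟨rfl, rfl⟩ | ⟨rfl, rfl⟩
      · exact Or.inl (SimpleGraph.Reachable.refl _)
      · exact Or.inr (SimpleGraph.Reachable.refl _)
    · have hadj : (auxG X (S \ {e}) ∅).Adj u c' :=
        ⟨hne, fun h => h, fun h => h, e', ⟨he', hee⟩, hse'⟩
      exact (ih hc).imp hadj.reachable.trans hadj.reachable.trans

lemma not_bridge_of_kconn {S : Set X.E}
    (hK : ((edgeSpan X S).toMultigraph).KConnected 2) {e : X.E} (he : e ∈ S) :
    ¬ X.IsBridge e := by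
  rintro ⟨x, y, hends, hnr⟩
  apply hnr
  have hxm : x ∈ X.ends e := by rw [hends]; exact Sym2.mem_mk_left _ _
  have hym : y ∈ X.ends e := by rw [hends]; exact Sym2.mem_mk_right _ _
  have hxy : x ≠ y := by
    rintro rfl
    exact X.loopless e (by rw [hends]; exact Sym2.mk_isDiag_iff.mpr rfl)
  have hxV : x ∈ blockVerts X S := ⟨e, he, hxm⟩
  have hyV : y ∈ blockVerts X S := ⟨e, he, hym⟩
  have hz : ∃ z ∈ blockVerts X S, z ≠ x ∧ z ≠ y := by
    by_contra hcon
    push_neg at hcon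
    have hsub : blockVerts X S ⊆ {x, y} := by
      intro v hv
      rcases eq_or_ne v x with rfl | hvx
      · exact Or.inl rfl
      · exact Or.inr (hcon v hv hvx)
    have h3 : (2 : ℕ) < Nat.card ↥(blockVerts X S) := hK.1
    rw [Nat.card_coe_set_eq] at h3
    have h4 := Set.ncard_le_ncard hsub (Set.toFinite _)
    rw [Set.ncard_pair hxy] at h4
    omega
  obtain ⟨z, hzV, hzx, hzy⟩ := hz
  have hempty : Nat.card ↥(∅ : Set X.V) ≤ 1 := by simp
  have hzx0 : (auxG X S ∅).Reachable z x :=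
    kconn_reachAvoid hK ∅ hempty hzV hxV (fun h => h) (fun h => h)
  have hsingle : ∀ w : X.V, Nat.card ↥({w} : Set X.V) ≤ 1 := by
    intro w
    simp
  have key : (auxG X (S \ {e}) ∅).Reachable x y := by
    rcases reach_split hends hzx0 (Or.inl rfl) with hzx' | hzy'
    · have h5 : (auxG X S {x}).Reachable y z :=
        kconn_reachAvoid hK {x} (hsingle x) hyV hzV (fun h => hxy h.symm) hzx
      exact ((h5.mono (auxG_avoid_le_del hxm)).trans hzx').symm
    · have h5 : (auxG X S {y}).Reachable x z :=
        kconn_reachAvoid hK {y} (hsingle y) hxV hzV hxy hzy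
      exact (h5.mono (auxG_avoid_le_del hym)).trans hzy'
  have hmap : ∀ {a b : X.V}, (auxG X (S \ {e}) ∅).Adj a b →
      (X.deleteEdges {e}).toSimpleGraph.Adj a b := by
    rintro a b ⟨hne, -, -, e', ⟨he'S, he'ne⟩, hse'⟩
    exact ⟨hne, ⟨e', he'ne⟩, hse'⟩
  exact SimpleGraph.Reachable.map ⟨id, hmap⟩ key

lemma blockset_nonempty {S : Set X.E} (h : IsBlockSet X S) : S.Nonempty := by
  rcases h with ⟨hK, -⟩ | ⟨e, rfl, -⟩
  · rcases Set.eq_empty_or_nonempty S with rfl | hne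
    · exfalso
      have h1 : (2 : ℕ) < Nat.card ↥(blockVerts X (∅ : Set X.E)) := hK.1
      have hie : IsEmpty ↥(blockVerts X (∅ : Set X.E)) := by
        refine ⟨fun v => ?_⟩
        obtain ⟨e, he, -⟩ := v.2
        exact he
      rw [Nat.card_of_isEmpty] at h1
      omega
    · exact hne
  · exact ⟨e, rfl⟩

lemma blockset_eq {S S' : Set X.E} (hS : IsBlockSet X S) (hS' : IsBlockSet X S')
    {e : X.E} (heS : e ∈ S) (heS' : e ∈ S') : S = S' := by
  rcases hS with ⟨hK, hmax⟩ | ⟨eb, rfl, hbr⟩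
  · rcases hS' with ⟨hK', hmax'⟩ | ⟨eb', rfl, hbr'⟩
    · have hU := union_kconn hK hK' heS heS'
      have hu1 := hmax (S ∪ S') Set.subset_union_left hU
      have hu2 := hmax' (S ∪ S') Set.subset_union_right hU
      exact hu1.symm.trans hu2
    · obtain rfl := heS'
      exact absurd hbr' (not_bridge_of_kconn hK heS)
  · rcases hS' with ⟨hK', hmax'⟩ | ⟨eb', rfl, hbr'⟩
    · obtain rfl := heS
      exact absurd hbr (not_bridge_of_kconn hK' heS')
    · obtain rfl := heS
      obtain rfl := heS'
      rfl

end LinearSize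

namespace LinearSize

open Multigraph

lemma conn_inl {G : Multigraph} (R : RotSystem G) {f : R.Face}
    (h : R.ConnectingFace f) : ∃ q, f = Sum.inl q := by
  rcases h with ⟨x, y, hfx, hfy, hne⟩ | ⟨e, -, d, d', -, -, -, hd, -⟩
  · cases f with
    | inl q => exact ⟨q, rfl⟩
    | inr x0 =>
      refine absurd (show x = y from ?_) (fun hxy => hne (by rw [hxy]))
      exact (show x0.1 = x from hfx).symm.trans hfy
  · exact ⟨_, hd.symm⟩

lemma card_dart_le (G : Multigraph) : Nat.card G.Dart ≤ 2 * Nat.card G.E := by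
  classical
  have h := card_le_of_rel (α := G.Dart) (β := G.E × Bool)
    (fun d p => d.1.1 = p.1 ∧ p.2 = decide (d.1.2 = (G.ends p.1).out.1))
    (fun d => ⟨(d.1.1, decide (d.1.2 = (G.ends d.1.1).out.1)), rfl, rfl⟩)
    ?_
  · rw [Nat.card_prod] at h
    have hb : Nat.card Bool = 2 := by simp [Nat.card_eq_fintype_card]
    rw [hb] at h
    omega
  · rintro d d' ⟨e, b⟩ ⟨he, hb⟩ ⟨he', hb'⟩
    have hiff := decide_eq_decide.mp (hb.symm.trans hb')
    have hm : d.1.2 ∈ G.ends e := by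
      rw [← show d.1.1 = e from he]
      exact d.2
    have hm' : d'.1.2 ∈ G.ends e := by
      rw [← show d'.1.1 = e from he']
      exact d'.2
    have hv : d.1.2 = d'.1.2 := by
      rcases mem_out hm with h1 | h1 <;> rcases mem_out hm' with h2 | h2
      · exact h1.trans h2.symm
      · exact absurd (hiff.mp h1) (by rw [h2]; exact (G.out_ne e).symm)
      · exact absurd (hiff.mpr h2) (by rw [h1]; exact (G.out_ne e).symm)
      · exact h1.trans h2.symm
    refine Subtype.ext (Prod.ext_iff.mpr ⟨he.trans he'.symm, hv⟩)

lemma card_E_le (G : Multigraph) (h3 : ∀ v : G.V, G.degree v ≤ 3) :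
    Nat.card G.E ≤ 3 * Nat.card G.V := by
  classical
  have hemb : ∀ v : G.V, ∃ f : {e : G.E // v ∈ G.ends e} → Fin 3,
      Function.Injective f := by
    intro v
    refine ⟨Fin.castLE (h3 v) ∘ (Finite.equivFinOfCardEq (rfl : Nat.card _ = G.degree v)), ?_⟩
    exact (Fin.castLE_injective _).comp (Equiv.injective _)
  choose femb hfemb using hemb
  have h := card_le_of_rel (α := G.E) (β := G.V × Fin 3)
    (fun e p => ∃ hm : p.1 ∈ G.ends e, p.2 = femb p.1 ⟨e, hm⟩)
    (fun e => ⟨((G.ends e).out.1, femb _ ⟨e, Sym2.out_fst_mem _⟩),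
      Sym2.out_fst_mem _, rfl⟩)
    ?_
  · rw [Nat.card_prod] at h
    have hf : Nat.card (Fin 3) = 3 := by simp [Nat.card_eq_fintype_card]
    rw [hf] at h
    omega
  · rintro e e' ⟨v, i⟩ ⟨hm, hi⟩ ⟨hm', hi'⟩
    have := hfemb v (hi.symm.trans hi')
    exact congrArg Subtype.val this

end LinearSize

namespace LinearSize

open Multigraph

variable {G : Multigraph} (R : RotSystem G)

lemma card_faceQ_le : Nat.card R.FaceQ ≤ Nat.card G.Dart :=
  Nat.card_le_card_of_surjective R.faceOf (fun q => ⟨q.out, Quotient.out_eq q⟩)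

lemma card_blocks_le :
    Nat.card (Σ f : {f : R.Face // R.ConnectingFace f}, R.FaceBlocks f.1) ≤
      Nat.card G.Dart := by
  classical
  haveI : ∀ f : R.Face, Finite (R.FaceBlocks f) := fun f =>
    inferInstanceAs (Finite {S : Set (R.faceGraph f).E // IsBlockSet (R.faceGraph f) S})
  refine card_le_of_rel
    (fun x d => Sum.inl (R.faceOf d) = x.1.1 ∧ ∃ e1 ∈ x.2.1, e1.1 = d.1.1) ?_ ?_
  · rintro ⟨f, S⟩
    obtain ⟨q, hq⟩ := conn_inl R f.2
    obtain ⟨e1, he1⟩ := blockset_nonempty S.2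
    have hinc : R.FaceIncE (Sum.inl q) e1.1 := by
      rw [← hq]
      exact e1.2
    obtain ⟨d, hd1, hd2⟩ := hinc
    exact ⟨d, by rw [hq, hd2], ⟨e1, he1, hd1.symm⟩⟩
  · rintro ⟨f, S⟩ ⟨f', S'⟩ d ⟨hf, e1, he1, hd1⟩ ⟨hf', e1', he1', hd1'⟩
    obtain rfl : f = f' := Subtype.ext (hf.symm.trans hf')
    obtain rfl : e1 = e1' := Subtype.ext (hd1.trans hd1'.symm)
    exact congrArg (Sigma.mk f) (Subtype.ext (blockset_eq S.2 S'.2 he1 he1'))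

lemma card_blocknbrs_le (vv : {v : G.V // G.degree v = 2}) :
    Nat.card {y : R.GFVert // R.GFGraph.Adj (Sum.inl vv) y ∧
      ∃ fS, y = Sum.inr (Sum.inr fS)} ≤ 6 := by
  classical
  have h := card_le_of_rel
    (α := {y : R.GFVert // R.GFGraph.Adj (Sum.inl vv) y ∧
      ∃ fS, y = Sum.inr (Sum.inr fS)})
    (β := {e : G.E // vv.1 ∈ G.ends e} × Bool)
    (fun y p => ∃ (fS : Σ f : {f : R.Face // R.ConnectingFace f}, R.FaceBlocks f.1)
      (d : G.Dart) (e1 : (R.faceGraph fS.1.1).E),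
      y.1 = Sum.inr (Sum.inr fS) ∧ e1 ∈ fS.2.1 ∧ e1.1 = p.1.1 ∧ d.1.1 = p.1.1 ∧
        Sum.inl (R.faceOf d) = fS.1.1 ∧ p.2 = decide (d.1.2 = (G.ends p.1.1).out.1))
    ?_ ?_
  · have hprod := Nat.card_prod {e : G.E // vv.1 ∈ G.ends e} Bool
    have hdeg : Nat.card {e : G.E // vv.1 ∈ G.ends e} = 2 := vv.2
    have hb : Nat.card Bool = 2 := by simp [Nat.card_eq_fintype_card]
    rw [hprod, hdeg, hb] at h
    omega
  · rintro ⟨y, hadj, fS, rfl⟩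
    have hL : R.GFAdjL (Sum.inl vv) (Sum.inr (Sum.inr fS)) := by
      rcases hadj with h | h
      · exact h
      · exact (h : False).elim
    obtain ⟨e1, he1, hv⟩ := hL
    obtain ⟨q, hq⟩ := conn_inl R fS.1.2
    have hinc : R.FaceIncE (Sum.inl q) e1.1 := by
      rw [← hq]
      exact e1.2
    obtain ⟨d, hd1, hd2⟩ := hinc
    exact ⟨(⟨e1.1, hv⟩, decide (d.1.2 = (G.ends e1.1).out.1)),
      fS, d, e1, rfl, he1, rfl, hd1, by rw [hq, hd2], rfl⟩
  · rintro y y' ⟨e0, b⟩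
      ⟨fS, d, e1, hyv, he1, he1e, hd1, hface, hb⟩
      ⟨fS', d', e1', hyv', he1', he1e', hd1', hface', hb'⟩
    have hdv : d.1.2 = d'.1.2 := by
      have hiff := decide_eq_decide.mp (hb.symm.trans hb')
      have hm : d.1.2 ∈ G.ends e0.1 := by
        rw [← show d.1.1 = e0.1 from hd1]
        exact d.2
      have hm' : d'.1.2 ∈ G.ends e0.1 := by
        rw [← show d'.1.1 = e0.1 from hd1']
        exact d'.2
      rcases mem_out hm with h1 | h1 <;> rcases mem_out hm' with h2 | h2
      · exact h1.trans h2.symm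
      · exact absurd (hiff.mp h1) (by rw [h2]; exact (G.out_ne e0.1).symm)
      · exact absurd (hiff.mpr h2) (by rw [h1]; exact (G.out_ne e0.1).symm)
      · exact h1.trans h2.symm
    obtain rfl : d = d' :=
      Subtype.ext (Prod.ext_iff.mpr ⟨hd1.trans hd1'.symm, hdv⟩)
    obtain ⟨f1, S1⟩ := fS
    obtain ⟨f1', S1'⟩ := fS'
    obtain rfl : f1 = f1' := Subtype.ext (hface.symm.trans hface')
    obtain rfl : e1 = e1' := Subtype.ext (he1e.trans he1e'.symm)
    obtain rfl : S1 = S1' := Subtype.ext (blockset_eq S1.2 S1'.2 he1 he1')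
    exact Subtype.ext (hyv.trans hyv'.symm)

lemma card_facenbrs_le (vv : {v : G.V // G.degree v = 2}) :
    Nat.card {y : R.GFVert // R.GFGraph.Adj (Sum.inl vv) y ∧
      ∃ ff, y = Sum.inr (Sum.inl ff)} ≤ 2 := by
  classical
  have h := card_le_of_rel
    (α := {y : R.GFVert // R.GFGraph.Adj (Sum.inl vv) y ∧
      ∃ ff, y = Sum.inr (Sum.inl ff)})
    (β := {d : G.Dart // d.1.2 = vv.1})
    (fun y dd => ∃ ff : {f : R.Face // ¬ R.ConnectingFace f},
      y.1 = Sum.inr (Sum.inl ff) ∧ ff.1 = Sum.inl (R.faceOf dd.1)) ?_ ?_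
  · have h2 : Nat.card {d : G.Dart // d.1.2 = vv.1} ≤
        Nat.card {e : G.E // vv.1 ∈ G.ends e} := by
      refine Nat.card_le_card_of_injective
        (fun dd => ⟨dd.1.1.1, by
          obtain ⟨⟨⟨e, w⟩, hm⟩, hw⟩ := dd
          dsimp only at hw ⊢
          rw [← hw]
          exact hm⟩) ?_
      intro dd dd' hh
      have he : dd.1.1.1 = dd'.1.1.1 := congrArg Subtype.val hh
      exact Subtype.ext (Subtype.ext (Prod.ext_iff.mpr ⟨he, dd.2.trans dd'.2.symm⟩))
    have hdeg : Nat.card {e : G.E // vv.1 ∈ G.ends e} = 2 := vv.2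
    omega
  · rintro ⟨y, hadj, ff, rfl⟩
    have hL : R.GFAdjL (Sum.inl vv) (Sum.inr (Sum.inl ff)) := by
      rcases hadj with h | h
      · exact h
      · exact (h : False).elim
    have hinc : R.FaceInc ff.1 vv.1 := hL
    cases hff : ff.1 with
    | inl q =>
      rw [hff] at hinc
      obtain ⟨d, hd2, hdq⟩ := hinc
      exact ⟨⟨d, hd2⟩, ff, rfl, by rw [hff, hdq]⟩
    | inr x0 =>
      exfalso
      rw [hff] at hinc
      have h0 : G.degree x0.1 = 0 := x0.2
      rw [show x0.1 = vv.1 from hinc, vv.2] at h0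
      omega
  · rintro y y' dd ⟨ff, hy, hf⟩ ⟨ff', hy', hf'⟩
    obtain rfl : ff = ff' := Subtype.ext (hf.trans hf'.symm)
    exact Subtype.ext (hy.trans hy'.symm)

lemma adj_shape {a b : R.GFVert} (h : R.GFAdjL a b) :
    ∃ vv, R.GFGraph.Adj (Sum.inl vv) b ∧ a = Sum.inl vv := by
  cases a with
  | inl vv => exact ⟨vv, Or.inl h, rfl⟩
  | inr f =>
    exfalso
    rcases b with w | (ff | fS) <;> exact (h : False).elim

end LinearSize


theorem gf_instance_has_linear_size :
    ∃ C : ℕ, ∀ (G : Multigraph), G.Simple →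
      (∀ v : G.V, 2 ≤ G.degree v) → (∀ v : G.V, G.degree v ≤ 3) →
      ∀ emb : PlanarEmbedding G,
        (∀ vv : {v : G.V // G.degree v = 2},
          Nat.card {y : emb.toRotSystem.GFVert //
              emb.toRotSystem.GFGraph.Adj (Sum.inl vv) y ∧
              ∃ fS, y = Sum.inr (Sum.inr fS)} ≤ 6 ∧
          Nat.card {y : emb.toRotSystem.GFVert //
              emb.toRotSystem.GFGraph.Adj (Sum.inl vv) y ∧
              ∃ ff, y = Sum.inr (Sum.inl ff)} ≤ 2) ∧
        Nat.card emb.toRotSystem.GFGraph.edgeSet ≤ 8 * Nat.card G.V ∧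
        Nat.card emb.toRotSystem.GFVert ≤ C * Nat.card G.V := by
  classical
  refine ⟨13, ?_⟩
  intro G hsimple hdeg2 hdeg3 emb
  set R := emb.toRotSystem with hR
  haveI hFB : ∀ f : R.Face, Finite (R.FaceBlocks f) := fun f =>
    inferInstanceAs (Finite {S : Set (R.faceGraph f).E // IsBlockSet (R.faceGraph f) S})
  haveI hFQ : Finite R.FaceQ := inferInstanceAs (Finite (Quotient R.faceSetoid))
  haveI hFace : Finite R.Face :=
    inferInstanceAs (Finite (R.FaceQ ⊕ {v : G.V // G.degree v = 0}))
  haveI hGFV : Finite R.GFVert := inferInstanceAs (Finite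
    ({v : G.V // G.degree v = 2} ⊕ ({f : R.Face // ¬ R.ConnectingFace f} ⊕
      (Σ f : {f : R.Face // R.ConnectingFace f}, R.FaceBlocks f.1))))
  refine ⟨fun vv => ⟨LinearSize.card_blocknbrs_le R vv, LinearSize.card_facenbrs_le R vv⟩,
    ?_, ?_⟩
  · -- edge count
    have hfib : ∀ vv : {v : G.V // G.degree v = 2},
        Nat.card {y : R.GFVert // R.GFGraph.Adj (Sum.inl vv) y} ≤ 8 := by
      intro vv
      have hsplit := LinearSize.card_le_of_rel
        (α := {y : R.GFVert // R.GFGraph.Adj (Sum.inl vv) y})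
        (β := {y : R.GFVert // R.GFGraph.Adj (Sum.inl vv) y ∧
                ∃ ff, y = Sum.inr (Sum.inl ff)} ⊕
              {y : R.GFVert // R.GFGraph.Adj (Sum.inl vv) y ∧
                ∃ fS, y = Sum.inr (Sum.inr fS)})
        (fun y z => (∃ h, z = Sum.inl ⟨y.1, h⟩) ∨ (∃ h, z = Sum.inr ⟨y.1, h⟩)) ?_ ?_
      · rw [Nat.card_sum] at hsplit
        have h1 := LinearSize.card_facenbrs_le R vv
        have h2 := LinearSize.card_blocknbrs_le R vv
        omega
      · rintro ⟨y, hadj⟩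
        rcases y with w | (ff | fS)
        · exfalso
          rcases hadj with h | h
          · exact (h : False).elim
          · exact (h : False).elim
        · exact ⟨Sum.inl ⟨Sum.inr (Sum.inl ff), hadj, ff, rfl⟩,
            Or.inl ⟨⟨hadj, ff, rfl⟩, rfl⟩⟩
        · exact ⟨Sum.inr ⟨Sum.inr (Sum.inr fS), hadj, fS, rfl⟩,
            Or.inr ⟨⟨hadj, fS, rfl⟩, rfl⟩⟩
      · rintro y y' z (⟨h, rfl⟩ | ⟨h, rfl⟩) (⟨h', hz'⟩ | ⟨h', hz'⟩)
        · have h2 := Sum.inl_injective hz'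
          have h3 : y.1 = y'.1 := congrArg (fun t => t.1) h2
          exact Subtype.ext h3
        · simp at hz'
        · simp at hz'
        · have h2 := Sum.inr_injective hz'
          have h3 : y.1 = y'.1 := congrArg (fun t => t.1) h2
          exact Subtype.ext h3
    have hembF : ∀ vv : {v : G.V // G.degree v = 2},
        ∃ f : {y : R.GFVert // R.GFGraph.Adj (Sum.inl vv) y} → Fin 8,
          Function.Injective f := by
      intro vv
      refine ⟨Fin.castLE (hfib vv) ∘ (Finite.equivFinOfCardEq rfl), ?_⟩
      exact (Fin.castLE_injective _).comp (Equiv.injective _)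
    choose femb hfemb using hembF
    have hcount := LinearSize.card_le_of_rel
      (α := ↥R.GFGraph.edgeSet)
      (β := {v : G.V // G.degree v = 2} × Fin 8)
      (fun ed z => ∃ y : {y : R.GFVert // R.GFGraph.Adj (Sum.inl z.1) y},
        ed.1 = s(Sum.inl z.1, y.1) ∧ z.2 = femb z.1 y) ?_ ?_
    · rw [Nat.card_prod] at hcount
      have h8 : Nat.card (Fin 8) = 8 := by simp [Nat.card_eq_fintype_card]
      have hVV : Nat.card {v : G.V // G.degree v = 2} ≤ Nat.card G.V :=
        Nat.card_le_card_of_injective Subtype.val Subtype.val_injective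
      rw [h8] at hcount
      calc Nat.card ↥R.GFGraph.edgeSet
          ≤ Nat.card {v : G.V // G.degree v = 2} * 8 := hcount
        _ ≤ Nat.card G.V * 8 := Nat.mul_le_mul hVV le_rfl
        _ = 8 * Nat.card G.V := Nat.mul_comm _ _
    · rintro ⟨z, hz⟩
      obtain ⟨a, b, rfl⟩ : ∃ a b, z = s(a, b) := ⟨z.out.1, z.out.2, z.out_eq.symm⟩
      have hadj : R.GFGraph.Adj a b := (R.GFGraph.mem_edgeSet).mp hz
      rcases hadj with h | h
      · obtain ⟨vv, hb2, rfl⟩ := LinearSize.adj_shape R h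
        exact ⟨(vv, femb vv ⟨b, hb2⟩), ⟨b, hb2⟩, rfl, rfl⟩
      · obtain ⟨vv, ha2, rfl⟩ := LinearSize.adj_shape R h
        exact ⟨(vv, femb vv ⟨a, ha2⟩), ⟨a, ha2⟩, Sym2.eq_swap, rfl⟩
    · rintro ed ed' z ⟨y, hed, hz⟩ ⟨y', hed', hz'⟩
      obtain rfl : y = y' := hfemb z.1 (hz.symm.trans hz')
      exact Subtype.ext (hed.trans hed'.symm)
  · -- vertex count
    have hV : Nat.card R.GFVert =
        Nat.card {v : G.V // G.degree v = 2} +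
        (Nat.card {f : R.Face // ¬ R.ConnectingFace f} +
         Nat.card (Σ f : {f : R.Face // R.ConnectingFace f}, R.FaceBlocks f.1)) := by
      have e1 : Nat.card R.GFVert = Nat.card ({v : G.V // G.degree v = 2} ⊕
        ({f : R.Face // ¬ R.ConnectingFace f} ⊕
          (Σ f : {f : R.Face // R.ConnectingFace f}, R.FaceBlocks f.1))) := rfl
      rw [e1, Nat.card_sum, Nat.card_sum]
    have h1 : Nat.card {v : G.V // G.degree v = 2} ≤ Nat.card G.V :=
      Nat.card_le_card_of_injective Subtype.val Subtype.val_injective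
    have hdart : Nat.card G.Dart ≤ 2 * Nat.card G.E := LinearSize.card_dart_le G
    have hE : Nat.card G.E ≤ 3 * Nat.card G.V := LinearSize.card_E_le G hdeg3
    have hFQle : Nat.card R.FaceQ ≤ Nat.card G.Dart := LinearSize.card_faceQ_le R
    haveI hie : IsEmpty {v : G.V // G.degree v = 0} := ⟨fun v => by
      have h2 := hdeg2 v.1
      rw [v.2] at h2
      omega⟩
    have h0 : Nat.card {v : G.V // G.degree v = 0} = 0 := Nat.card_of_isEmpty
    have hFaceC : Nat.card R.Face =
        Nat.card R.FaceQ + Nat.card {v : G.V // G.degree v = 0} := by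
      have e2 : Nat.card R.Face =
          Nat.card (R.FaceQ ⊕ {v : G.V // G.degree v = 0}) := rfl
      rw [e2, Nat.card_sum]
    have hNF : Nat.card {f : R.Face // ¬ R.ConnectingFace f} ≤ Nat.card R.Face :=
      Nat.card_le_card_of_injective Subtype.val Subtype.val_injective
    have hBlk := LinearSize.card_blocks_le R
    rw [hV]
    omega
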